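/- arXiv:1412.3023 — 6 statements merged into one kernel-verified Lean document; each statement's English description precedes it below -/
import Mathlib

section
/- If G is the disjoint union of a graph H with c−2 copies of the star K_{1,k} (where c > 2), then G is in (c,k)-LCP if and only if H is in (2,k)-LCP. -/
/-!
Every edge of a star contains its centre, so a colour that no centre receives has all of its
monochromatic edges inside `H`. The `c - 2` centres use at most `c - 2` colours, which leaves two
colours whose classes live in `H`; merging every other colour into one of them 2-colours `H`.
Conversely, a good 2-colouring of `H` extends by giving each star a fresh colour of its own.
-/

open Finset

open scoped Classical in
/-- `G ∈ (c,k)`-LCP: there is a `c`-coloring such that each color has at least `k`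
monochromatic edges. -/
def LCP {V : Type*} [Fintype V] (G : SimpleGraph V) (c k : ℕ) : Prop :=
  ∃ φ : V → Fin c, ∀ i : Fin c,
    k ≤ (G.edgeFinset.filter (fun e => ∀ v ∈ e, φ v = i)).card

/-- The disjoint union of `c` copies of the star `K_{1,k}`: in each copy `j`,
the center `(j, 0)` is adjacent to the `k` leaves `(j, a)`, `a ≠ 0`. -/
def stars (c k : ℕ) : SimpleGraph (Fin c × Fin (k + 1)) where
  Adj x y := x.1 = y.1 ∧ (x.2 = 0 ∧ y.2 ≠ 0 ∨ y.2 = 0 ∧ x.2 ≠ 0)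
  symm := ⟨by intro x y h; exact ⟨h.1.symm, h.2.symm⟩⟩
  loopless := ⟨by rintro x ⟨-, h⟩; rcases h with ⟨h1, h2⟩ | ⟨h1, h2⟩ <;> exact h2 h1⟩

open scoped Classical

namespace SimpleGraph

variable {V W κ κ' : Type*} [Fintype V] [Fintype W] [DecidableEq κ] [DecidableEq κ']

/-- The `[DecidableEq κ]` binder makes `monoEdges G φ i` at `κ = Fin c` literally the finset
counted in `LCP`. -/
noncomputable def monoEdges (G : SimpleGraph V) (φ : V → κ) (i : κ) : Finset (Sym2 V) :=
  G.edgeFinset.filter fun e => ∀ v ∈ e, φ v = i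

theorem _root_.lcp_iff_monoEdges (G : SimpleGraph V) (c k : ℕ) :
    LCP G c k ↔ ∃ φ : V → Fin c, ∀ i, k ≤ #(G.monoEdges φ i) :=
  Iff.rfl

@[simp]
theorem stars_adj {m k : ℕ} {x y : Fin m × Fin (k + 1)} :
    (stars m k).Adj x y ↔ x.1 = y.1 ∧ (x.2 = 0 ∧ y.2 ≠ 0 ∨ y.2 = 0 ∧ x.2 ≠ 0) :=
  Iff.rfl

theorem monoEdges_subset_monoEdges {G : SimpleGraph V} {φ : V → κ} {ψ : V → κ'} {i : κ} {t : κ'}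
    (h : ∀ v, φ v = i → ψ v = t) : G.monoEdges φ i ⊆ G.monoEdges ψ t := by
  intro e he
  simp only [monoEdges, mem_filter] at he ⊢
  exact ⟨he.1, fun v hv => h v (he.2 v hv)⟩

theorem monoEdges_comp_apply (G : SimpleGraph V) {g : κ → κ'} (hg : Function.Injective g)
    (φ : V → κ) (i : κ) : G.monoEdges (g ∘ φ) (g i) = G.monoEdges φ i := by
  simp [monoEdges, hg.eq_iff]

theorem monoEdges_sum (G : SimpleGraph V) (G' : SimpleGraph W) (φ : V ⊕ W → κ) (i : κ) :
    (G ⊕g G').monoEdges φ i =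
      (G.monoEdges (φ ∘ Sum.inl) i).map ⟨_, Sym2.map.injective Sum.inl_injective⟩ ∪
        (G'.monoEdges (φ ∘ Sum.inr) i).map ⟨_, Sym2.map.injective Sum.inr_injective⟩ := by
  ext e
  induction e using Sym2.ind with | _ x y => ?_
  rcases x with a | a <;> rcases y with b | b <;>
    simp [monoEdges, Sym2.exists] <;> grind [Adj.symm]

theorem card_monoEdges_sum (G : SimpleGraph V) (G' : SimpleGraph W) (φ : V ⊕ W → κ) (i : κ) :
    #((G ⊕g G').monoEdges φ i) =
      #(G.monoEdges (φ ∘ Sum.inl) i) + #(G'.monoEdges (φ ∘ Sum.inr) i) := by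
  rw [monoEdges_sum, card_union_of_disjoint, card_map, card_map]
  simp only [Finset.disjoint_left, mem_map, Function.Embedding.coeFn_mk, not_exists, not_and]
  rintro _ ⟨e, -, rfl⟩ e' -
  induction e using Sym2.ind
  induction e' using Sym2.ind
  simp

theorem monoEdges_stars_eq_empty {m k : ℕ} {φ : Fin m × Fin (k + 1) → κ} {i : κ}
    (h : ∀ j, φ (j, 0) ≠ i) : (stars m k).monoEdges φ i = ∅ := by
  refine eq_empty_of_forall_notMem fun e he => ?_
  induction e using Sym2.ind with | _ x y => ?_
  simp only [monoEdges, mem_filter, mem_edgeFinset, mem_edgeSet, Sym2.mem_iff,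
    forall_eq_or_imp, forall_eq] at he
  obtain ⟨⟨-, ⟨hx, -⟩ | ⟨hy, -⟩⟩, hφx, hφy⟩ := he
  · exact h x.1 (by rwa [← hx])
  · exact h y.1 (by rwa [← hy])

theorem le_card_monoEdges_stars_fst (m k : ℕ) (j : Fin m) :
    k ≤ #((stars m k).monoEdges Prod.fst j) := by
  calc k = #(univ : Finset (Fin k)) := by simp
    _ ≤ _ := card_le_card_of_injOn (fun a => s((j, 0), (j, a.succ)))
        (fun a _ => by
          simp only [mem_coe, monoEdges, mem_filter, mem_edgeFinset, mem_edgeSet, stars_adj,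
            Sym2.mem_iff]
          exact ⟨⟨trivial, .inl ⟨trivial, a.succ_ne_zero⟩⟩, by rintro v (rfl | rfl) <;> rfl⟩)
        (fun a _ b _ hab => by simpa using Sym2.congr_right.mp hab)

end SimpleGraph

open SimpleGraph

theorem Fintype.exists_two_forall_apply_ne_of_card_add_two_le {α β : Type*} [Fintype α]
    [Fintype β] (f : α → β) (h : Fintype.card α + 2 ≤ Fintype.card β) :
    ∃ i₁ i₂, i₁ ≠ i₂ ∧ (∀ a, f a ≠ i₁) ∧ ∀ a, f a ≠ i₂ := by
  have hmissing : 1 < #(univ \ univ.image f) := by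
    have := (card_image_le (s := univ) (f := f)).trans_eq card_univ
    rw [card_sdiff_of_subset (subset_univ _), card_univ]
    omega
  obtain ⟨i₁, hi₁, i₂, hi₂, hne⟩ := Finset.one_lt_card.mp hmissing
  simp only [mem_sdiff, mem_univ, mem_image, true_and, not_exists] at hi₁ hi₂
  exact ⟨i₁, i₂, hne, hi₁, hi₂⟩

theorem lcp_two_of_ne {V κ : Type*} [Fintype V] [DecidableEq κ] {G : SimpleGraph V} {k : ℕ}
    {φ : V → κ} {i₁ i₂ : κ} (hne : i₁ ≠ i₂) (h₁ : k ≤ #(G.monoEdges φ i₁))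
    (h₂ : k ≤ #(G.monoEdges φ i₂)) : LCP G 2 k := by
  refine (lcp_iff_monoEdges G 2 k).2 ⟨fun v => if φ v = i₁ then 0 else 1, fun t => ?_⟩
  fin_cases t
  · exact h₁.trans (card_le_card (monoEdges_subset_monoEdges fun v hv => by simp [hv]))
  · exact h₂.trans (card_le_card (monoEdges_subset_monoEdges fun v hv => by simp [hv, hne.symm]))

theorem stmt_4 {W : Type*} [Fintype W] (H : SimpleGraph W) (c k : ℕ) (hc : 2 < c) :
    LCP (H ⊕g stars (c - 2) k) c k ↔ LCP H 2 k := by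
  simp only [lcp_iff_monoEdges]
  constructor
  · rintro ⟨φ, hφ⟩
    obtain ⟨i₁, i₂, hne, h₁, h₂⟩ := Fintype.exists_two_forall_apply_ne_of_card_add_two_le
      (fun j : Fin (c - 2) => φ (.inr (j, 0))) (by simp only [Fintype.card_fin]; omega)
    have hH : ∀ i, (∀ j, φ (.inr (j, 0)) ≠ i) → k ≤ #(H.monoEdges (φ ∘ Sum.inl) i) := by
      intro i hi
      simpa [card_monoEdges_sum, monoEdges_stars_eq_empty (φ := φ ∘ Sum.inr) hi] using hφ i
    exact lcp_two_of_ne hne (hH i₁ h₁) (hH i₂ h₂)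
  · rintro ⟨ψ, hψ⟩
    let e : Fin 2 ⊕ Fin (c - 2) ≃ Fin c := finSumFinEquiv.trans (finCongr (by omega))
    refine ⟨Sum.elim (e ∘ Sum.inl ∘ ψ) (e ∘ Sum.inr ∘ Prod.fst), fun i => ?_⟩
    rw [card_monoEdges_sum, Sum.elim_comp_inl, Sum.elim_comp_inr]
    obtain ⟨t | j, rfl⟩ := e.surjective i
    · rw [monoEdges_comp_apply H e.injective,
        monoEdges_comp_apply _ Sum.inl_injective]
      exact (hψ t).trans le_self_add
    · rw [monoEdges_comp_apply (stars _ k) e.injective,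
        monoEdges_comp_apply _ Sum.inr_injective]
      exact (le_card_monoEdges_stars_fst _ k j).trans le_add_self
end

section
/- Let G be a forest in which every component is a star with at least 1 edge and less than k edges, and suppose G has at least 2k edges in total. Then there is a subset I of the components such that the components in I together have at least k edges and at most 2k vertices. -/
/-!
Write `d_C` for the number of edges of the star `C`, so that `C` has `d_C + 1` vertices.
Choose a set `I` of components that is inclusion-minimal subject to having at least `k` edges,
and let `d = min_{C ∈ I} d_C`. Dropping a component of `I` with `d` edges leaves fewer than `k`,
so `I` has at most `k - 1 + d` edges and hence at most `(k - 1 + d) / d` components.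
Since `1 ≤ d ≤ k - 1`, `(d - 1)(k - 1 - d) ≥ 0` turns this into `|I| ≤ k + 1 - d`, and `I` has
at most `(k - 1 + d) + (k + 1 - d) = 2k` vertices.
-/

open Finset

open scoped Classical in
/-- The connected component `C` of `G` is a star `K_{1,j}` with center `u`:
its vertex set is `u` together with the `j = deg u ≥ 1` neighbors of `u`,
each of which is a leaf (degree 1). -/
def IsStarComponent {V : Type*} [Fintype V] (G : SimpleGraph V)
    (C : G.ConnectedComponent) (u : V) : Prop :=
  C.supp = insert u (G.neighborSet u) ∧ 1 ≤ G.degree u ∧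
    ∀ v ∈ G.neighborSet u, G.degree v = 1

theorem Nat.add_le_two_mul_of_mul_le {n d S k : ℕ} (hd : 1 ≤ d) (hdk : d < k)
    (hn : n * d ≤ S) (hS : S < k + d) : S + n ≤ 2 * k := by
  have hn' : n ≤ k + 1 - d := by
    refine le_of_mul_le_mul_right ?_ hd
    zify [hdk.le.trans (Nat.le_succ k)]
    nlinarith
  omega

theorem Finset.exists_subset_le_sum_and_forall_sum_lt_add {α : Type*} {s : Finset α}
    {f : α → ℕ} {k : ℕ} (hk : k ≤ ∑ a ∈ s, f a) :
    ∃ I ⊆ s, k ≤ ∑ a ∈ I, f a ∧ ∀ a ∈ I, ∑ b ∈ I, f b < k + f a := by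
  classical
  obtain ⟨I, hIs, hI⟩ := exists_minimal_le_of_wellFoundedLT (fun J => k ≤ ∑ a ∈ J, f a) s hk
  rw [minimal_iff_forall_erase fun J J' hJ' hJ'J => hJ'.trans (sum_le_sum_of_subset hJ'J)] at hI
  refine ⟨I, hIs, hI.1, fun a ha => ?_⟩
  have := hI.2 a ha
  rw [← add_sum_erase I f ha]
  omega

theorem Finset.exists_subset_le_sum_and_sum_add_one_le {α : Type*} {s : Finset α}
    {f : α → ℕ} {k : ℕ} (hpos : ∀ a ∈ s, 1 ≤ f a) (hlt : ∀ a ∈ s, f a < k)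
    (hk : k ≤ ∑ a ∈ s, f a) :
    ∃ I ⊆ s, k ≤ ∑ a ∈ I, f a ∧ ∑ a ∈ I, (f a + 1) ≤ 2 * k := by
  obtain ⟨I, hIs, hIk, hIlt⟩ := exists_subset_le_sum_and_forall_sum_lt_add hk
  refine ⟨I, hIs, hIk, ?_⟩
  rw [sum_add_distrib, sum_const, smul_eq_mul, mul_one]
  obtain rfl | hI := I.eq_empty_or_nonempty
  · simp
  obtain ⟨a, ha, hamin⟩ := I.exists_min_image f hI
  exact Nat.add_le_two_mul_of_mul_le (hpos a (hIs ha)) (hlt a (hIs ha))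
    (by simpa using card_nsmul_le_sum I f (f a) hamin) (hIlt a ha)

namespace SimpleGraph

theorem connectedComponentMk_eq_of_mem_of_mem_edgeSet {V : Type*} {G : SimpleGraph V}
    {e : Sym2 V} (he : e ∈ G.edgeSet) {v w : V} (hv : v ∈ e) (hw : w ∈ e) :
    G.connectedComponentMk v = G.connectedComponentMk w := by
  induction e with
  | _ a b =>
    have hab := ConnectedComponent.sound (G.mem_edgeSet.mp he).reachable
    rcases Sym2.mem_iff.mp hv with rfl | rfl <;> rcases Sym2.mem_iff.mp hw with rfl | rfl <;>
      simp [hab]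

section
open scoped Classical
variable {V : Type*} [Fintype V] {G : SimpleGraph V}

theorem card_filter_edgeFinset_mem_eq_sum (I : Finset G.ConnectedComponent) :
    #{e ∈ G.edgeFinset | ∀ v ∈ e, G.connectedComponentMk v ∈ I} =
      ∑ C ∈ I, #{e ∈ G.edgeFinset | ∀ v ∈ e, G.connectedComponentMk v = C} := by
  rw [← card_biUnion]
  · congr 1
    ext e
    simp only [mem_filter, mem_biUnion]
    constructor
    · rintro ⟨he, hI⟩
      exact ⟨_, hI _ e.out_fst_mem, he, fun w hw =>
        connectedComponentMk_eq_of_mem_of_mem_edgeSet (mem_edgeFinset.mp he) hw e.out_fst_mem⟩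
    · rintro ⟨C, hC, he, hv⟩
      exact ⟨he, fun v hv' => hv v hv' ▸ hC⟩
  · intro C _ D _ hCD
    refine disjoint_filter.mpr fun e _ hC hD => hCD ?_
    rw [← hC _ e.out_fst_mem, hD _ e.out_fst_mem]

theorem card_filter_connectedComponentMk_mem_eq_sum (I : Finset G.ConnectedComponent) :
    #{v | G.connectedComponentMk v ∈ I} = ∑ C ∈ I, #{v | G.connectedComponentMk v = C} :=
  (sum_card_fiberwise_eq_card_filter _ _ _).symm

end

end SimpleGraph

namespace IsStarComponent

open SimpleGraph
open scoped Classical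
variable {V : Type*} [Fintype V] {G : SimpleGraph V} {C : G.ConnectedComponent} {u : V}

theorem center_mem_supp (hC : IsStarComponent G C u) : u ∈ C.supp :=
  hC.1 ▸ Set.mem_insert u _

theorem eq_center_or_eq_center_of_adj (hC : IsStarComponent G C u) {a b : V}
    (ha : a ∈ C.supp) (hb : b ∈ C.supp) (hab : G.Adj a b) : a = u ∨ b = u := by
  rw [hC.1] at ha hb
  by_contra! hne
  have hua : G.Adj u a := ha.resolve_left hne.1
  have hub : G.Adj u b := hb.resolve_left hne.2
  obtain ⟨w, -, hw⟩ := degree_eq_one_iff_existsUnique_adj.mp (hC.2.2 a hua)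
  exact hub.ne ((hw u hua.symm).trans (hw b hab).symm)

theorem card_edges (hC : IsStarComponent G C u) :
    #{e ∈ G.edgeFinset | ∀ v ∈ e, G.connectedComponentMk v = C} = G.degree u := by
  rw [← card_incidenceFinset_eq_degree]
  congr 1
  ext e
  simp only [mem_filter, mem_incidenceFinset, incidenceSet, Set.mem_ofPred_eq, mem_edgeFinset]
  refine and_congr_right fun he => ⟨fun heC => ?_, fun hu v hv =>
    (connectedComponentMk_eq_of_mem_of_mem_edgeSet he hv hu).trans hC.center_mem_supp⟩
  induction e with
  | _ a b =>
    exact Sym2.mem_iff.mpr <| (hC.eq_center_or_eq_center_of_adj (heC a (Sym2.mem_mk_left a b))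
      (heC b (Sym2.mem_mk_right a b)) he).imp Eq.symm Eq.symm

theorem card_vertices (hC : IsStarComponent G C u) :
    #{v | G.connectedComponentMk v = C} = G.degree u + 1 := by
  rw [← card_neighborFinset_eq_degree, ← card_insert_of_notMem (G.notMem_neighborFinset_self u)]
  congr 1
  ext v
  simp only [mem_filter, mem_univ, true_and, mem_insert, mem_neighborFinset]
  rw [← ConnectedComponent.mem_supp_iff, hC.1]
  rfl

end IsStarComponent

open scoped Classical in
theorem stmt_7 {V : Type*} [Fintype V] (G : SimpleGraph V) (k : ℕ)
    (hstar : ∀ C : G.ConnectedComponent, ∃ u : V, IsStarComponent G C u ∧ G.degree u < k)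
    (hm : 2 * k ≤ G.edgeFinset.card) :
    ∃ I : Finset G.ConnectedComponent,
      k ≤ (G.edgeFinset.filter (fun e => ∀ v ∈ e, G.connectedComponentMk v ∈ I)).card ∧
      (Finset.univ.filter (fun v => G.connectedComponentMk v ∈ I)).card ≤ 2 * k := by
  choose center hcenter hdeg using hstar
  have hedges (I : Finset G.ConnectedComponent) :
      #{e ∈ G.edgeFinset | ∀ v ∈ e, G.connectedComponentMk v ∈ I} =
        ∑ C ∈ I, G.degree (center C) :=
    (G.card_filter_edgeFinset_mem_eq_sum I).trans (sum_congr rfl fun C _ => (hcenter C).card_edges)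
  have htotal : k ≤ ∑ C, G.degree (center C) := by
    rw [← hedges univ]
    simpa using (by omega : k ≤ #G.edgeFinset)
  obtain ⟨I, -, hIedges, hIvertices⟩ := univ.exists_subset_le_sum_and_sum_add_one_le
    (fun C _ => (hcenter C).2.1) (fun C _ => hdeg C) htotal
  refine ⟨I, (hedges I).symm ▸ hIedges, ?_⟩
  rw [G.card_filter_connectedComponentMk_mem_eq_sum I]
  exact (sum_congr rfl fun C _ => (hcenter C).card_vertices).trans_le hIvertices
end

section
/- For every integer i ≥ 0, every bipartite graph G with n vertices and at least 4^i·k + n·(2^i − 1) edges is in (2^i, k)-LCP. -/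
/-
Induction on `i`, colouring a vertex set `U` with `e(U) ≥ 4 ^ i * k + |U| * (2 ^ i - 1)`.
A vertex of degree `< 2 * (2 ^ i - 1)` in `U` costs fewer edges than the `2 ^ (i + 1) - 1` it is
allotted, so it can be deleted. Otherwise `U` has minimum degree `≥ 2b` with `b = 2 ^ i - 1`, and
the bipartite splitting lemma yields `S ⊆ U` with `e(S) ≥ N + b|S|` and `e(U \ S) ≥ N + b|U \ S|`
for `N = 4 ^ i * k`; both halves are coloured with `2 ^ i` colours by induction.

For the splitting lemma let `P, Q` be the sides and write `S = A ∪ T` with `A ⊆ P`, `T ⊆ Q`,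
so that `e(S) = ∑_{β ∈ T} d_A(β)`. Starting from `S = U`, remove vertices one at a time while `S`
stays heavy (`e(S) ≥ N + b|S|`), keeping `T` between the `β` with a clear majority of their
`P`-neighbours in `A` and those with about half of them in `A`. At a pair where no further step
keeps `S` heavy, the failed step bounds `∑_{β ∈ T} d_P(β)`, and since every `β ∉ T` has about half
of its neighbours in `P \ A`, this forces `U \ S` to be heavy as well.
-/

open Finset

namespace SimpleGraph

open scoped Classical

section Degree

variable {V : Type*} (G : SimpleGraph V)

noncomputable def degOn (A : Finset V) (v : V) : ℕ := #{w ∈ A | G.Adj v w}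

variable {G}

lemma degOn_le_card (A : Finset V) (v : V) : G.degOn A v ≤ #A := card_filter_le _ _

lemma degOn_sdiff_add_degOn {A P : Finset V} (h : A ⊆ P) (v : V) :
    G.degOn (P \ A) v + G.degOn A v = G.degOn P v := by
  rw [degOn, degOn, degOn, ← card_union_of_disjoint (disjoint_filter_filter sdiff_disjoint),
    ← filter_union, sdiff_union_of_subset h]

lemma degOn_le_degOn_erase_add_one (A : Finset V) (a v : V) :
    G.degOn A v ≤ G.degOn (A.erase a) v + 1 := by
  rw [degOn, degOn, filter_erase]
  have := pred_card_le_card_erase (s := {w ∈ A | G.Adj v w}) (a := a)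
  omega

section Sweep

variable (G) (P Q : Finset V) (b N : ℕ)

noncomputable def strictMajority (A : Finset V) : Finset V :=
  {β ∈ Q | G.degOn P β + 2 ≤ 2 * G.degOn A β}

noncomputable def nearMajority (A : Finset V) : Finset V :=
  {β ∈ Q | G.degOn P β ≤ 2 * G.degOn A β + 1}

def IsHeavy (A T : Finset V) : Prop := N + b * (#A + #T) ≤ ∑ β ∈ T, G.degOn A β

variable {G P Q b N} {A T : Finset V}

lemma isHeavy_compl_of_sum_le (hAP : A ⊆ P) (hTQ : T ⊆ Q) (hT : G.strictMajority P Q A ⊆ T)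
    (hm : 4 * N + (#P + #Q) * (2 * b + 1) ≤ ∑ β ∈ Q, G.degOn P β)
    (hs : ∑ β ∈ T, G.degOn P β ≤ 2 * N + #P + #T + 2 * b * (#A + #T)) :
    G.IsHeavy b N (P \ A) (Q \ T) := by
  have hcompl : ∀ β ∈ Q \ T, G.degOn P β ≤ 2 * G.degOn (P \ A) β + 1 := by
    intro β hβ
    obtain ⟨hβQ, hβT⟩ := mem_sdiff.1 hβ
    have hweak : ¬ G.degOn P β + 2 ≤ 2 * G.degOn A β := fun h => hβT (hT (mem_filter.2 ⟨hβQ, h⟩))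
    have := G.degOn_sdiff_add_degOn hAP β
    omega
  have hsum : ∑ β ∈ Q \ T, G.degOn P β ≤ 2 * ∑ β ∈ Q \ T, G.degOn (P \ A) β + #(Q \ T) := by
    calc ∑ β ∈ Q \ T, G.degOn P β ≤ ∑ β ∈ Q \ T, (2 * G.degOn (P \ A) β + 1) := sum_le_sum hcompl
      _ = _ := by rw [sum_add_distrib, ← mul_sum, sum_const, smul_eq_mul, mul_one]
  have hQ := sum_sdiff (f := G.degOn P) hTQ
  have hcardP := card_sdiff_add_card_eq_card hAP
  have hcardQ := card_sdiff_add_card_eq_card hTQ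
  unfold IsHeavy
  nlinarith

lemma sum_le_of_not_isHeavy_erase {β₀ : V} (hT : T ⊆ G.nearMajority P Q A) (hβ₀T : β₀ ∈ T)
    (hβ₀ : β₀ ∉ G.strictMajority P Q A) (h : ¬ G.IsHeavy b N A (T.erase β₀)) :
    ∑ β ∈ T, G.degOn P β ≤ 2 * N + #P + #T + 2 * b * (#A + #T) := by
  have hβ₀Q : β₀ ∈ Q := (mem_filter.1 (hT hβ₀T)).1
  have hβ₀deg : 2 * G.degOn A β₀ ≤ #P + 1 := by
    have hweak : ¬ G.degOn P β₀ + 2 ≤ 2 * G.degOn A β₀ := fun h => hβ₀ (mem_filter.2 ⟨hβ₀Q, h⟩)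
    have := G.degOn_le_card P β₀
    omega
  have hsum : ∑ β ∈ T, G.degOn P β ≤ 2 * ∑ β ∈ T, G.degOn A β + #T := by
    calc ∑ β ∈ T, G.degOn P β ≤ ∑ β ∈ T, (2 * G.degOn A β + 1) :=
          sum_le_sum fun β hβ => (mem_filter.1 (hT hβ)).2
      _ = _ := by rw [sum_add_distrib, ← mul_sum, sum_const, smul_eq_mul, mul_one]
  have herase := sum_erase_add T (G.degOn A) hβ₀T
  have hcard := card_erase_add_one hβ₀T
  unfold IsHeavy at h
  nlinarith

lemma sum_strictMajority_le (hdeg : ∀ β ∈ Q, 2 * b ≤ G.degOn P β) {a : V} (ha : a ∈ A)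
    (h : ¬ G.IsHeavy b N (A.erase a) (G.nearMajority P Q (A.erase a))) :
    ∑ β ∈ G.strictMajority P Q A, G.degOn P β
      ≤ 2 * N + #P + #(G.strictMajority P Q A) + 2 * b * (#A + #(G.strictMajority P Q A)) := by
  set L := G.strictMajority P Q A
  set H := G.nearMajority P Q (A.erase a)
  have hL : ∀ β ∈ L, G.degOn P β ≤ 2 * G.degOn (A.erase a) β := by
    intro β hβ
    have := (mem_filter.1 hβ).2
    have := G.degOn_le_degOn_erase_add_one A a β
    omega
  have hLH : L ⊆ H := fun β hβ =>
    mem_filter.2 ⟨(mem_filter.1 hβ).1, (hL β hβ).trans (Nat.le_succ _)⟩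
  have hHL : b * #(H \ L) ≤ ∑ β ∈ H \ L, G.degOn (A.erase a) β := by
    rw [mul_comm, ← smul_eq_mul]
    refine card_nsmul_le_sum _ _ _ fun β hβ => ?_
    have hβH := mem_filter.1 (mem_sdiff.1 hβ).1
    have := hdeg β hβH.1
    omega
  have hsumL : ∑ β ∈ L, G.degOn P β ≤ 2 * ∑ β ∈ L, G.degOn (A.erase a) β := by
    rw [mul_sum]; exact sum_le_sum hL
  have hH := sum_sdiff (f := G.degOn (A.erase a)) hLH
  have hcardH := card_sdiff_add_card_eq_card hLH
  have hcardA := card_erase_add_one ha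
  unfold IsHeavy at h
  nlinarith

lemma strictMajority_subset_nearMajority : G.strictMajority P Q A ⊆ G.nearMajority P Q A :=
  monotone_filter_right _ fun _ _ h => by omega

/-- Either `U \ S` is heavy, or `isHeavy_compl_of_sum_le` fails; then the step before `(A, T)` in
the sweep (drop a vertex of `T` outside `strictMajority A`, or, if there is none, a vertex of `A`)
still leaves a heavy pair, and we descend to it. -/
lemma exists_isHeavy_isHeavy_compl (hdeg : ∀ β ∈ Q, 2 * b ≤ G.degOn P β)
    (hm : 4 * N + (#P + #Q) * (2 * b + 1) ≤ ∑ β ∈ Q, G.degOn P β) (hAP : A ⊆ P)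
    (hlo : G.strictMajority P Q A ⊆ T) (hhi : T ⊆ G.nearMajority P Q A)
    (hheavy : G.IsHeavy b N A T) :
    ∃ A' ⊆ P, ∃ T' ⊆ Q, G.IsHeavy b N A' T' ∧ G.IsHeavy b N (P \ A') (Q \ T') := by
  induction A using Finset.strongInduction generalizing T with | H A ihA => ?_
  induction T using Finset.strongInduction with | H T ihT => ?_
  have hTQ : T ⊆ Q := hhi.trans (filter_subset _ _)
  by_cases hcompl : G.IsHeavy b N (P \ A) (Q \ T)
  · exact ⟨A, hAP, T, hTQ, hheavy, hcompl⟩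
  have hs : ¬ ∑ β ∈ T, G.degOn P β ≤ 2 * N + #P + #T + 2 * b * (#A + #T) :=
    fun hs => hcompl (isHeavy_compl_of_sum_le hAP hTQ hlo hm hs)
  by_cases hT : T ⊆ G.strictMajority P Q A
  · obtain rfl : T = G.strictMajority P Q A := Subset.antisymm hT hlo
    obtain rfl | ⟨a, ha⟩ := A.eq_empty_or_nonempty
    · refine absurd (le_of_eq_of_le ?_ (Nat.zero_le _)) hs
      rw [strictMajority, filter_false_of_mem fun β _ => by simp [degOn], sum_empty]
    refine ihA (A.erase a) (erase_ssubset ha) ((erase_subset a A).trans hAP)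
      strictMajority_subset_nearMajority subset_rfl ?_
    by_contra h
    exact hs (sum_strictMajority_le hdeg ha h)
  · obtain ⟨β, hβT, hβ⟩ := not_subset.1 hT
    refine ihT (T.erase β) (erase_ssubset hβT)
      (fun x hx => mem_erase.2 ⟨ne_of_mem_of_not_mem hx hβ, hlo hx⟩)
      ((erase_subset β T).trans hhi) ?_
    by_contra h
    exact hs (sum_le_of_not_isHeavy_erase hhi hβT hβ h)

end Sweep

end Degree

variable {V : Type*} [Fintype V] (G : SimpleGraph V)

noncomputable def edgesIn (U : Finset V) : Finset (Sym2 V) :=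
  G.edgeFinset.filter fun e => ∀ v ∈ e, v ∈ U

variable {G}

@[simp]
lemma mk_mem_edgesIn {U : Finset V} {x y : V} :
    s(x, y) ∈ G.edgesIn U ↔ G.Adj x y ∧ x ∈ U ∧ y ∈ U := by
  simp [edgesIn]

lemma edgesIn_univ : G.edgesIn univ = G.edgeFinset := by
  simp [edgesIn]

lemma edgesIn_mono {U U' : Finset V} (h : U ⊆ U') : G.edgesIn U ⊆ G.edgesIn U' :=
  monotone_filter_right _ fun _ _ he v hv => h (he v hv)

lemma edgesIn_eq_empty {A : Finset V} (hA : G.IsIndepSet A) : G.edgesIn A = ∅ := by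
  refine eq_empty_of_forall_notMem fun e he => ?_
  induction e using Sym2.ind with
  | _ x y =>
    obtain ⟨hxy, hx, hy⟩ := mk_mem_edgesIn.1 he
    exact hA hx hy hxy.ne hxy

lemma card_edgesIn_insert {U : Finset V} {v : V} (hv : v ∉ U) :
    #(G.edgesIn (insert v U)) = #(G.edgesIn U) + G.degOn U v := by
  have hsplit : G.edgesIn (insert v U) =
      G.edgesIn U ∪ {w ∈ U | G.Adj v w}.image (fun w => s(v, w)) := by
    ext e
    induction e using Sym2.ind with
    | _ x y =>
      simp only [mk_mem_edgesIn, mem_insert, mem_union, mem_image, mem_filter, Sym2.eq_iff]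
      constructor
      · rintro ⟨hxy, rfl | hx, rfl | hy⟩
        · exact absurd hxy G.irrefl
        · exact Or.inr ⟨y, ⟨hy, hxy⟩, Or.inl ⟨rfl, rfl⟩⟩
        · exact Or.inr ⟨x, ⟨hx, hxy.symm⟩, Or.inr ⟨rfl, rfl⟩⟩
        · exact Or.inl ⟨hxy, hx, hy⟩
      · rintro (⟨hxy, hx, hy⟩ | ⟨w, ⟨hw, hvw⟩, ⟨rfl, rfl⟩ | ⟨rfl, rfl⟩⟩)
        · exact ⟨hxy, Or.inr hx, Or.inr hy⟩
        · exact ⟨hvw, Or.inl rfl, Or.inr hw⟩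
        · exact ⟨hvw.symm, Or.inr hw, Or.inl rfl⟩
  have hdisj : Disjoint (G.edgesIn U) ({w ∈ U | G.Adj v w}.image (fun w => s(v, w))) := by
    simp only [disjoint_right, mem_image]
    rintro _ ⟨w, -, rfl⟩ he
    exact hv ((mk_mem_edgesIn.1 he).2.1)
  rw [hsplit, card_union_of_disjoint hdisj,
    card_image_of_injective _ fun _ _ h => Sym2.congr_right.1 h, degOn]

lemma card_edgesIn_le_erase_add {U : Finset V} {v : V} (hv : v ∈ U) :
    #(G.edgesIn U) ≤ #(G.edgesIn (U.erase v)) + G.degOn U v := by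
  conv_lhs => rw [← insert_erase hv]
  rw [card_edgesIn_insert (notMem_erase v U)]
  exact Nat.add_le_add_left (card_le_card (monotone_filter_left _ (erase_subset v U))) _

lemma card_edgesIn_union {A T : Finset V} (hA : G.IsIndepSet A) (hT : G.IsIndepSet T)
    (hAT : Disjoint A T) : #(G.edgesIn (A ∪ T)) = ∑ β ∈ T, G.degOn A β := by
  induction T using Finset.induction_on with
  | empty => simp [edgesIn_eq_empty hA]
  | insert β T hβ ih =>
    have hT' : G.IsIndepSet T := hT.mono (by simp)
    have hβA : β ∉ A := disjoint_right.1 hAT (mem_insert_self β T)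
    have hdeg : G.degOn (A ∪ T) β = G.degOn A β := by
      rw [degOn, degOn, filter_union, filter_eq_empty_iff.2 fun w hw => hT (mem_insert_self β T)
        (mem_insert_of_mem hw) (ne_of_mem_of_not_mem hw hβ).symm, union_empty]
    rw [union_insert, card_edgesIn_insert (by simp [hβ, hβA]), hdeg, sum_insert hβ,
      ih hT' (disjoint_of_subset_right (subset_insert β T) hAT), add_comm]

section Split

variable {P Q : Finset V} {b N : ℕ} {A T : Finset V}

lemma isHeavy_iff (hP : G.IsIndepSet P) (hQ : G.IsIndepSet Q) (hPQ : Disjoint P Q)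
    (hAP : A ⊆ P) (hTQ : T ⊆ Q) :
    G.IsHeavy b N A T ↔ N + b * #(A ∪ T) ≤ #(G.edgesIn (A ∪ T)) := by
  rw [IsHeavy, card_edgesIn_union (hP.mono hAP) (hQ.mono hTQ) (hPQ.mono hAP hTQ),
    card_union_of_disjoint (hPQ.mono hAP hTQ)]

lemma exists_split_of_isIndepSet (hP : G.IsIndepSet P) (hQ : G.IsIndepSet Q)
    (hPQ : Disjoint P Q) (hdeg : ∀ β ∈ Q, 2 * b ≤ G.degOn P β)
    (hm : 4 * N + #(P ∪ Q) * (2 * b + 1) ≤ #(G.edgesIn (P ∪ Q))) :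
    ∃ S ⊆ P ∪ Q, N + b * #S ≤ #(G.edgesIn S) ∧
      N + b * #((P ∪ Q) \ S) ≤ #(G.edgesIn ((P ∪ Q) \ S)) := by
  rw [card_edgesIn_union hP hQ hPQ, card_union_of_disjoint hPQ] at hm
  have hstart : G.IsHeavy b N P Q := by unfold IsHeavy; nlinarith
  obtain ⟨A, hAP, T, hTQ, hAT, hcompl⟩ := exists_isHeavy_isHeavy_compl hdeg hm subset_rfl
    (filter_subset _ _) (fun β hβ => mem_filter.2 ⟨hβ, by omega⟩) hstart
  have hdiff : (P ∪ Q) \ (A ∪ T) = (P \ A) ∪ (Q \ T) := by grind [Finset.disjoint_left]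
  refine ⟨A ∪ T, union_subset_union hAP hTQ, (isHeavy_iff hP hQ hPQ hAP hTQ).1 hAT, ?_⟩
  rw [hdiff]
  exact (isHeavy_iff hP hQ hPQ sdiff_subset sdiff_subset).1 hcompl

end Split

theorem exists_split_of_colorable (hG : G.Colorable 2) {U : Finset V} {b N : ℕ}
    (hdeg : ∀ v ∈ U, 2 * b ≤ G.degOn U v)
    (hm : 4 * N + #U * (2 * b + 1) ≤ #(G.edgesIn U)) :
    ∃ S ⊆ U, N + b * #S ≤ #(G.edgesIn S) ∧ N + b * #(U \ S) ≤ #(G.edgesIn (U \ S)) := by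
  obtain ⟨C⟩ := hG
  set P := {v ∈ U | C v = 0}
  set Q := {v ∈ U | ¬C v = 0}
  have hUPQ : P ∪ Q = U := filter_union_filter_not_eq _ _
  have hP : G.IsIndepSet P := (C.isIndepSet_colorClass 0).mono fun v hv => (mem_filter.1 hv).2
  have hQ : G.IsIndepSet Q := (C.isIndepSet_colorClass 1).mono fun v hv =>
    Fin.eq_one_of_ne_zero _ (mem_filter.1 hv).2
  have hdegQ : ∀ β ∈ Q, 2 * b ≤ G.degOn P β := by
    intro β hβ
    refine (hdeg β (mem_filter.1 hβ).1).trans (card_le_card fun w hw => ?_)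
    obtain ⟨hwU, hβw⟩ := mem_filter.1 hw
    refine mem_filter.2 ⟨?_, hβw⟩
    rw [← hUPQ] at hwU
    exact (mem_union.1 hwU).resolve_right fun hwQ => hQ hβ hwQ hβw.ne hβw
  rw [← hUPQ] at hm ⊢
  exact exists_split_of_isIndepSet hP hQ (disjoint_filter_filter_not _ _ _) hdegQ hm

variable (G) in
/-- `LCP` restricted to `U`, with an arbitrary type `κ` of colours so that colourings of two
halves combine into one with colours `κ ⊕ κ'`. -/
def LCPOn (U : Finset V) (κ : Type*) (k : ℕ) : Prop :=
  ∃ φ : V → κ, ∀ c, k ≤ #(G.edgesIn {v ∈ U | φ v = c})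

namespace LCPOn

variable {U U' S : Finset V} {κ κ' : Type*} {k : ℕ}

lemma of_unique [Unique κ] (h : k ≤ #(G.edgesIn U)) : G.LCPOn U κ k :=
  ⟨fun _ => default, fun c => by simpa [Unique.eq_default c] using h⟩

lemma mono (hU : U ⊆ U') (h : G.LCPOn U κ k) : G.LCPOn U' κ k := by
  obtain ⟨φ, hφ⟩ := h
  exact ⟨φ, fun c => (hφ c).trans (card_le_card (edgesIn_mono (filter_subset_filter _ hU)))⟩

lemma of_equiv (e : κ ≃ κ') (h : G.LCPOn U κ k) : G.LCPOn U κ' k := by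
  obtain ⟨φ, hφ⟩ := h
  refine ⟨e ∘ φ, fun c => ?_⟩
  simpa only [Function.comp_apply, ← e.eq_symm_apply] using hφ (e.symm c)

lemma sum (hS : S ⊆ U) (h₁ : G.LCPOn S κ k) (h₂ : G.LCPOn (U \ S) κ' k) :
    G.LCPOn U (κ ⊕ κ') k := by
  obtain ⟨φ₁, hφ₁⟩ := h₁
  obtain ⟨φ₂, hφ₂⟩ := h₂
  refine ⟨fun v => if v ∈ S then .inl (φ₁ v) else .inr (φ₂ v), ?_⟩
  rintro (c | c)
  · convert hφ₁ c using 3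
    ext v
    by_cases hv : v ∈ S
    · simp [hv, hS hv]
    · simp [hv]
  · convert hφ₂ c using 3
    ext v
    by_cases hv : v ∈ S <;> simp [hv]

lemma lcp {n : ℕ} (h : G.LCPOn univ (Fin n) k) : LCP G n k := by
  obtain ⟨φ, hφ⟩ := h
  refine ⟨φ, fun c => (hφ c).trans_eq ?_⟩
  simp [edgesIn]

end LCPOn

theorem lcpOn_of_le_card_edgesIn (hG : G.Colorable 2) (k i : ℕ) (U : Finset V)
    (h : 4 ^ i * k + #U * (2 ^ i - 1) ≤ #(G.edgesIn U)) : G.LCPOn U (Fin (2 ^ i)) k := by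
  induction i generalizing U with
  | zero =>
    rw [pow_zero]
    exact .of_unique (by simpa using h)
  | succ i ih =>
    induction U using Finset.strongInduction with | H U ihU => ?_
    have hb : 2 * (2 ^ i - 1) + 1 = 2 ^ (i + 1) - 1 := by
      have := Nat.one_le_two_pow (n := i)
      rw [pow_succ]; omega
    by_cases hlow : ∃ v ∈ U, G.degOn U v < 2 * (2 ^ i - 1)
    · obtain ⟨v, hv, hdeg⟩ := hlow
      refine (ihU (U.erase v) (erase_ssubset hv) ?_).mono (erase_subset v U)
      have herase := card_edgesIn_le_erase_add (G := G) hv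
      rw [← card_erase_add_one hv, add_one_mul] at h
      omega
    · simp only [not_exists, not_and, not_lt] at hlow
      obtain ⟨S, hSU, hS, hUS⟩ := exists_split_of_colorable hG hlow (N := 4 ^ i * k)
        ((le_of_eq (by rw [hb]; ring)).trans h)
      exact ((ih S (by linarith)).sum hSU (ih (U \ S) (by linarith))).of_equiv
        (finSumFinEquiv.trans (finCongr (by ring)))

end SimpleGraph

open scoped Classical in
theorem stmt_11 {V : Type*} [Fintype V] (G : SimpleGraph V) (i k : ℕ)
    (hbip : G.Colorable 2)
    (hm : 4 ^ i * k + Fintype.card V * (2 ^ i - 1) ≤ G.edgeFinset.card) :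
    LCP G (2 ^ i) k :=
  (G.lcpOn_of_le_card_edgesIn hbip k i univ
    (by rwa [SimpleGraph.edgesIn_univ, card_univ])).lcp
end

section
/- Let G be a graph with at least 3k−2 edges in which every connected component has fewer than k edges. Then G is in (2,k)-LCP. -/
/-!
Every edge lies inside one connected component, so a colouring that is constant on components
has, in each colour, exactly the edges of the components of that colour. Adding components
greedily until at least `k` edges are collected overshoots by fewer than `k`, so colour `0`
gets between `k` and `2k - 2` edges and the remaining at least `(3k - 2) - (2k - 2) = k` edges
go to colour `1`.
-/

open Finset

theorem Finset.exists_subset_sum_mem_Icc {ι : Type*} (f : ι → ℕ) {a b : ℕ} (s : Finset ι)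
    (hf : ∀ i ∈ s, f i ≤ b) (ha : a ≤ ∑ i ∈ s, f i) :
    ∃ t ⊆ s, ∑ i ∈ t, f i ∈ Icc a (a - 1 + b) := by
  classical
  induction s using Finset.induction with
  | empty => exact ⟨∅, Subset.rfl, by simp_all⟩
  | insert j s hj ih =>
    by_cases hs : a ≤ ∑ i ∈ s, f i
    · obtain ⟨t, hts, ht⟩ := ih (fun i hi => hf i (mem_insert_of_mem hi)) hs
      exact ⟨t, hts.trans (subset_insert j s), ht⟩
    · refine ⟨insert j s, Subset.rfl, ?_⟩
      have hfj := hf j (mem_insert_self j s)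
      rw [sum_insert hj] at ha ⊢
      rw [mem_Icc]
      omega

namespace SimpleGraph

variable {V : Type*} (G : SimpleGraph V)

theorem connectedComponentMk_eq_of_mem_edgeSet {e : Sym2 V} (he : e ∈ G.edgeSet) {v w : V}
    (hv : v ∈ e) (hw : w ∈ e) : G.connectedComponentMk v = G.connectedComponentMk w := by
  induction e using Sym2.ind with
  | _ x y =>
    have hxy : G.connectedComponentMk x = G.connectedComponentMk y :=
      ConnectedComponent.connectedComponentMk_eq_of_adj he
    rw [Sym2.mem_iff] at hv hw
    rcases hv with rfl | rfl <;> rcases hw with rfl | rfl <;> simp [hxy]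

section
open scoped Classical

variable [Fintype V]

theorem card_edgeFinset_filter_mem_components (u : Finset G.ConnectedComponent) :
    #{e ∈ G.edgeFinset | ∀ v ∈ e, G.connectedComponentMk v ∈ u} =
      ∑ C ∈ u, #{e ∈ G.edgeFinset | ∀ v ∈ e, G.connectedComponentMk v = C} := by
  rw [← card_biUnion]
  · congr 1
    ext e
    simp only [mem_biUnion, mem_filter]
    constructor
    · rintro ⟨he, hu⟩
      refine ⟨_, hu _ e.out_fst_mem, he, fun v hv => ?_⟩
      exact G.connectedComponentMk_eq_of_mem_edgeSet (mem_edgeFinset.mp he) hv e.out_fst_mem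
    · rintro ⟨C, hC, he, hCe⟩
      exact ⟨he, fun v hv => hCe v hv ▸ hC⟩
  · intro C _ C' _ hne
    rw [Function.onFun, Finset.disjoint_left]
    refine fun e he he' => hne ?_
    rw [mem_filter] at he he'
    exact (he.2 _ e.out_fst_mem).symm.trans (he'.2 _ e.out_fst_mem)

theorem card_monochromatic_edges_of_componentwise {α : Type*} [DecidableEq α]
    (c : G.ConnectedComponent → α)
    (i : α) :
    #{e ∈ G.edgeFinset | ∀ v ∈ e, c (G.connectedComponentMk v) = i} =
      ∑ C with c C = i, #{e ∈ G.edgeFinset | ∀ v ∈ e, G.connectedComponentMk v = C} := by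
  rw [← card_edgeFinset_filter_mem_components]
  simp only [mem_filter, mem_univ, true_and]

end

end SimpleGraph

open scoped Classical in
theorem stmt_13 {V : Type*} [Fintype V] (G : SimpleGraph V) (k : ℕ)
    (hm : 3 * k - 2 ≤ G.edgeFinset.card)
    (hcomp : ∀ C : G.ConnectedComponent,
      (G.edgeFinset.filter (fun e => ∀ v ∈ e, G.connectedComponentMk v = C)).card < k) :
    LCP G 2 k := by
  set F : G.ConnectedComponent → ℕ :=
    fun C => #{e ∈ G.edgeFinset | ∀ v ∈ e, G.connectedComponentMk v = C}
  have htotal : #G.edgeFinset = ∑ C, F C := by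
    simpa using G.card_edgeFinset_filter_mem_components univ
  obtain ⟨t, -, ht⟩ := exists_subset_sum_mem_Icc F (a := k) (b := k - 1) univ
    (fun C _ => Nat.le_sub_one_of_lt (hcomp C)) (by omega)
  have hsplit := sum_add_sum_compl t F
  rw [mem_Icc] at ht
  let c : G.ConnectedComponent → Fin 2 := fun C => if C ∈ t then 0 else 1
  refine ⟨fun v => c (G.connectedComponentMk v), fun i => ?_⟩
  beta_reduce
  rw [G.card_monochromatic_edges_of_componentwise c i]
  fin_cases i
  · have hc : ({C | c C = 0} : Finset _) = t := by ext C; by_cases hC : C ∈ t <;> simp [c, hC]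
    simp only [Fin.zero_eta, hc]
    exact ht.1
  · have hc : ({C | c C = 1} : Finset _) = tᶜ := by ext C; by_cases hC : C ∈ t <;> simp [c, hC]
    simp only [Fin.mk_one, hc]
    change k ≤ ∑ C ∈ tᶜ, F C
    omega
end

section
/- Let G be a connected graph with at least k edges (k ≥ 1). Then there exists a set A ⊆ V(G) with |A| ≤ k+1 and |E(G[A])| ≥ k such that every vertex u ∈ A has more than d neighbors in A, where d = |E(G[A])| − k. -/
open Finset

open scoped Classical in
lemma aux_count_erase {V : Type*} [Fintype V] (G : SimpleGraph V)
    (A : Finset V) (u : V) (hu : u ∈ A) :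
    (G.edgeFinset.filter (fun e => ∀ v ∈ e, v ∈ A)).card =
      (G.edgeFinset.filter (fun e => ∀ v ∈ e, v ∈ A.erase u)).card +
      (A.filter (fun v => G.Adj u v)).card := by
  classical
  set T := G.edgeFinset.filter (fun e => ∀ v ∈ e, v ∈ A) with hT
  have hsplit := Finset.card_filter_add_card_filter_not
    (s := T) (p := fun e => u ∈ e)
  have h1 : T.filter (fun e => ¬ u ∈ e) =
      G.edgeFinset.filter (fun e => ∀ v ∈ e, v ∈ A.erase u) := by
    ext e
    simp only [hT, Finset.mem_filter, Finset.mem_erase]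
    constructor
    · rintro ⟨⟨he, hA⟩, hnu⟩
      exact ⟨he, fun v hv => ⟨fun h => hnu (h ▸ hv), hA v hv⟩⟩
    · rintro ⟨he, hA⟩
      exact ⟨⟨he, fun v hv => (hA v hv).2⟩, fun h => (hA u h).1 rfl⟩
  have h2 : (A.filter (fun v => G.Adj u v)).card =
      (T.filter (fun e => u ∈ e)).card := by
    apply Finset.card_bij (fun v _ => s(u, v))
    · intro v hv
      have h := Finset.mem_filter.mp hv
      refine Finset.mem_filter.mpr ⟨Finset.mem_filter.mpr
        ⟨SimpleGraph.mem_edgeFinset.mpr h.2, ?_⟩, Sym2.mem_mk_left u v⟩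
      intro w hw
      rcases Sym2.mem_iff.mp hw with rfl | rfl
      · exact hu
      · exact h.1
    · intro v1 hv1 v2 hv2 heq
      exact Sym2.congr_right.mp heq
    · intro e he
      have h := Finset.mem_filter.mp he
      have hue : u ∈ e := h.2
      obtain ⟨b, rfl⟩ := Sym2.mem_iff_exists.mp hue
      have hT' := Finset.mem_filter.mp h.1
      have hadj : G.Adj u b := (SimpleGraph.mem_edgeSet G).mp
        (SimpleGraph.mem_edgeFinset.mp hT'.1)
      refine ⟨b, Finset.mem_filter.mpr ⟨hT'.2 b (Sym2.mem_mk_right u b), hadj⟩, rfl⟩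
  have h1c := congrArg Finset.card h1
  omega

open scoped Classical in
lemma aux_exists_prefix {V : Type*} [Fintype V] (G : SimpleGraph V)
    (hconn : G.Connected) :
    ∀ m, 1 ≤ m → m ≤ Fintype.card V →
      ∃ A : Finset V, A.card = m ∧
        m - 1 ≤ (G.edgeFinset.filter (fun e => ∀ v ∈ e, v ∈ A)).card := by
  classical
  intro m
  induction m with
  | zero => intro h; omega
  | succ n ih =>
    intro _ hle
    rcases Nat.eq_or_lt_of_le (Nat.one_le_iff_ne_zero.mpr (by omega) :
        (1 : ℕ) ≤ n + 1) with h1 | h1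
    · -- n = 0
      have hn : n = 0 := by omega
      subst hn
      have : Nonempty V := hconn.nonempty
      obtain ⟨v⟩ := this
      exact ⟨{v}, by simp, by simp⟩
    · -- n ≥ 1
      obtain ⟨A, hcard, hedges⟩ := ih (by omega) (by omega)
      have hA_ne : A.Nonempty := Finset.card_pos.mp (by omega)
      have hAne_univ : A ≠ Finset.univ := by
        intro h
        rw [h, Finset.card_univ] at hcard
        omega
      obtain ⟨b, hb⟩ : ∃ b, b ∉ A := by
        by_contra h
        push_neg at h
        exact hAne_univ (Finset.eq_univ_iff_forall.mpr h)
      obtain ⟨a, ha⟩ := hA_ne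
      obtain ⟨p⟩ := hconn a b
      obtain ⟨d, _, hd1, hd2⟩ := p.exists_boundary_dart (↑A : Set V)
        (by simpa using ha) (by simpa using hb)
      have hd1' : d.fst ∈ A := by simpa using hd1
      have hd2' : d.snd ∉ A := by simpa using hd2
      have hadj : G.Adj d.fst d.snd := d.adj
      refine ⟨insert d.snd A, ?_, ?_⟩
      · rw [Finset.card_insert_of_notMem hd2', hcard]
      · have hsub : insert s(d.fst, d.snd)
            (G.edgeFinset.filter (fun e => ∀ v ∈ e, v ∈ A)) ⊆
            G.edgeFinset.filter (fun e => ∀ v ∈ e, v ∈ insert d.snd A) := by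
          intro e he
          rcases Finset.mem_insert.mp he with rfl | he
          · refine Finset.mem_filter.mpr ⟨SimpleGraph.mem_edgeFinset.mpr hadj, ?_⟩
            intro w hw
            rcases Sym2.mem_iff.mp hw with rfl | rfl
            · exact Finset.mem_insert_of_mem hd1'
            · exact Finset.mem_insert_self _ _
          · have h := Finset.mem_filter.mp he
            exact Finset.mem_filter.mpr
              ⟨h.1, fun v hv => Finset.mem_insert_of_mem (h.2 v hv)⟩
        have hnot : s(d.fst, d.snd) ∉
            G.edgeFinset.filter (fun e => ∀ v ∈ e, v ∈ A) := by
          intro h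
          exact hd2' ((Finset.mem_filter.mp h).2 d.snd (Sym2.mem_mk_right _ _))
        calc n + 1 - 1 = n := rfl
          _ ≤ (G.edgeFinset.filter (fun e => ∀ v ∈ e, v ∈ A)).card + 1 := by omega
          _ = (insert s(d.fst, d.snd)
                (G.edgeFinset.filter (fun e => ∀ v ∈ e, v ∈ A))).card := by
            rw [Finset.card_insert_of_notMem hnot]
          _ ≤ _ := Finset.card_le_card hsub

open scoped Classical in
theorem stmt_15 {V : Type*} [Fintype V] (G : SimpleGraph V) (k : ℕ) (hk : 1 ≤ k)
    (hconn : G.Connected) (hm : k ≤ G.edgeFinset.card) :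
    ∃ A : Finset V, A.card ≤ k + 1 ∧
      k ≤ (G.edgeFinset.filter (fun e => ∀ v ∈ e, v ∈ A)).card ∧
      ∀ u ∈ A,
        (G.edgeFinset.filter (fun e => ∀ v ∈ e, v ∈ A)).card - k <
          (A.filter (fun v => G.Adj u v)).card := by
  classical
  -- Step 1: existence of a set with card ≤ k+1 and ≥ k induced edges
  have hex : ∃ n, ∃ A : Finset V, A.card = n ∧ n ≤ k + 1 ∧
      k ≤ (G.edgeFinset.filter (fun e => ∀ v ∈ e, v ∈ A)).card := by
    by_cases hV : Fintype.card V ≤ k + 1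
    · refine ⟨(Finset.univ : Finset V).card, Finset.univ, rfl, by simpa using hV, ?_⟩
      have : G.edgeFinset.filter (fun e => ∀ v ∈ e, v ∈ (Finset.univ : Finset V)) =
          G.edgeFinset := by
        apply Finset.filter_true_of_mem
        intro e _ v _
        exact Finset.mem_univ v
      rw [this]; exact hm
    · obtain ⟨A, hcard, hedges⟩ := aux_exists_prefix G hconn (k + 1)
        (by omega) (by omega)
      exact ⟨k + 1, A, hcard, le_refl _, by omega⟩
  -- Step 2: take a minimal such n
  obtain ⟨n0, hn0⟩ := hex
  have hP : ∃ n, ∃ A : Finset V, A.card = n ∧ n ≤ k + 1 ∧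
      k ≤ (G.edgeFinset.filter (fun e => ∀ v ∈ e, v ∈ A)).card := ⟨n0, hn0⟩
  obtain ⟨A, hcard, hle, hedges⟩ := Nat.find_spec hP
  refine ⟨A, hcard ▸ hle, hedges, ?_⟩
  intro u hu
  by_contra hcon
  push_neg at hcon
  -- remove u
  have herase := aux_count_erase G A u hu
  have hk' : k ≤ (G.edgeFinset.filter (fun e => ∀ v ∈ e, v ∈ A.erase u)).card := by
    omega
  have hcardlt : (A.erase u).card < A.card := Finset.card_erase_lt_of_mem hu
  have hmin := Nat.find_min hP (m := (A.erase u).card) (by omega)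
  exact hmin ⟨A.erase u, rfl, by omega, hk'⟩
end

section
/- For the graph 2nK_2 (the disjoint union of 2n independent edges), the maximum k such that 2nK_2 is in (2,k)-LCP equals n, while the minimum over all bipartitions (V1,V2) of V of max{|E(V1)|,|E(V2)|} equals 0. -/
/-!
Monochromatic edge sets of distinct colours are disjoint, so a 2-colouring with `k`
monochromatic edges in each colour forces `2k ≤ |E| = 2n`; colouring the vertices of the
first `n` edges `0` and the rest `1` attains `k = n`. Splitting every edge between `A` and its
complement leaves no edge inside either side, so the min-max is `0`.
-/

open Finset

/-- `2nK₂`: the disjoint union of `2n` independent edges, on `2n × 2` vertices: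
`(i, a)` and `(j, b)` are adjacent iff `i = j` and `a ≠ b`. -/
def matchingGraph (n : ℕ) : SimpleGraph (Fin (2 * n) × Fin 2) where
  Adj x y := x.1 = y.1 ∧ x.2 ≠ y.2
  symm := ⟨by intro x y h; exact ⟨h.1.symm, h.2.symm⟩⟩
  loopless := ⟨by rintro x ⟨-, h⟩; exact h rfl⟩

open scoped Classical in
theorem LCP.mul_le_card_edgeFinset {V : Type*} [Fintype V] {G : SimpleGraph V} {c k : ℕ}
    (h : LCP G c k) : c * k ≤ #G.edgeFinset := by
  obtain ⟨φ, hφ⟩ := h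
  have hdisj : ((univ : Finset (Fin c)) : Set (Fin c)).PairwiseDisjoint
      fun i => G.edgeFinset.filter fun e => ∀ v ∈ e, φ v = i := by
    intro i _ j _ hij
    refine disjoint_filter.2 fun e _ hi hj => hij ?_
    induction e using Sym2.ind with
    | _ x y => exact (hi x (Sym2.mem_mk_left x y)).symm.trans (hj x (Sym2.mem_mk_left x y))
  calc c * k = ∑ _i : Fin c, k := by simp
    _ ≤ ∑ i, #(G.edgeFinset.filter fun e => ∀ v ∈ e, φ v = i) :=
      sum_le_sum fun i _ => hφ i
    _ = #(univ.biUnion fun i => G.edgeFinset.filter fun e => ∀ v ∈ e, φ v = i) :=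
      (card_biUnion hdisj).symm
    _ ≤ #G.edgeFinset := card_le_card (biUnion_subset.2 fun i _ => filter_subset _ _)

theorem SimpleGraph.edgeFinset_filter_forall_mem_eq_empty {V : Type*} {G : SimpleGraph V}
    [Fintype G.edgeSet] {P : V → Prop} [DecidablePred fun e : Sym2 V => ∀ v ∈ e, P v]
    (hP : ∀ x y, G.Adj x y → P x → ¬ P y) :
    G.edgeFinset.filter (fun e => ∀ v ∈ e, P v) = ∅ := by
  refine filter_eq_empty_iff.2 fun e he hPe => ?_
  induction e using Sym2.ind with
  | _ x y =>
    exact hP x y (G.mem_edgeFinset.1 he) (hPe x (Sym2.mem_mk_left x y))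
      (hPe y (Sym2.mem_mk_right x y))

def matchingEdge (n : ℕ) : Fin (2 * n) ↪ Sym2 (Fin (2 * n) × Fin 2) :=
  ⟨fun i => s((i, 0), (i, 1)), fun i j h => by simpa using h⟩

@[simp]
theorem matchingEdge_apply (n : ℕ) (i : Fin (2 * n)) :
    matchingEdge n i = s((i, 0), (i, 1)) :=
  rfl

theorem matchingGraph_edgeFinset (n : ℕ) [Fintype (matchingGraph n).edgeSet] :
    (matchingGraph n).edgeFinset = univ.map (matchingEdge n) := by
  ext e
  induction e using Sym2.ind with
  | _ x y =>
    obtain ⟨i, a⟩ := x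
    obtain ⟨j, b⟩ := y
    rw [SimpleGraph.mem_edgeFinset, SimpleGraph.mem_edgeSet]
    simp only [matchingGraph, mem_map, mem_univ, true_and, matchingEdge_apply]
    fin_cases a <;> fin_cases b <;> simp [eq_comm]

theorem card_edgeFinset_matchingGraph (n : ℕ) [Fintype (matchingGraph n).edgeSet] :
    #(matchingGraph n).edgeFinset = 2 * n := by
  simp [matchingGraph_edgeFinset]

theorem card_monochromatic_matchingGraph (n : ℕ) [Fintype (matchingGraph n).edgeSet]
    (ψ : Fin (2 * n) → Fin 2) (c : Fin 2)
    [DecidablePred fun e : Sym2 (Fin (2 * n) × Fin 2) => ∀ v ∈ e, ψ v.1 = c] :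
    #((matchingGraph n).edgeFinset.filter fun e => ∀ v ∈ e, ψ v.1 = c) =
      #(univ.filter (ψ · = c)) := by
  rw [matchingGraph_edgeFinset, filter_map, card_map]
  congr 1
  ext i
  simp

theorem Fin.card_filter_divNat_eq (m n : ℕ) (c : Fin m) :
    #(univ.filter fun i : Fin (m * n) => i.divNat = c) = n := by
  have : univ.filter (fun i : Fin (m * n) => i.divNat = c) =
      (({c} : Finset (Fin m)) ×ˢ (univ : Finset (Fin n))).map finProdFinEquiv.toEmbedding := by
    ext i
    simp [eq_comm]
  simp [this]

open scoped Classical in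
theorem lcp_matchingGraph (n : ℕ) : LCP (matchingGraph n) 2 n :=
  ⟨fun v => v.1.divNat, fun c => by
    rw [card_monochromatic_matchingGraph n Fin.divNat, Fin.card_filter_divNat_eq]⟩

open scoped Classical in
theorem stmt_17 (n : ℕ) :
    IsGreatest {k : ℕ | LCP (matchingGraph n) 2 k} n ∧
    IsLeast {m : ℕ | ∃ A : Finset (Fin (2 * n) × Fin 2),
      m = max ((matchingGraph n).edgeFinset.filter (fun e => ∀ v ∈ e, v ∈ A)).card
              ((matchingGraph n).edgeFinset.filter (fun e => ∀ v ∈ e, v ∉ A)).card} 0 := by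
  refine ⟨⟨lcp_matchingGraph n, fun k hk => ?_⟩,
    ⟨⟨univ.filter (·.2 = 0), ?_⟩, fun m _ => m.zero_le⟩⟩
  · have := hk.mul_le_card_edgeFinset
    rw [card_edgeFinset_matchingGraph] at this
    omega
  · rw [SimpleGraph.edgeFinset_filter_forall_mem_eq_empty,
      SimpleGraph.edgeFinset_filter_forall_mem_eq_empty]
    · rfl
    · rintro x y ⟨-, hxy⟩ hx hy
      simp only [mem_filter, mem_univ, true_and] at hx hy
      omega
    · rintro x y ⟨-, hxy⟩ hx hy
      simp only [mem_filter, mem_univ, true_and] at hx hy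
      exact hxy (hx.trans hy.symm)
end
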